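/- Let H be a separable complex Hilbert space and let u, v : ℤ × ℤ → H form a pair of dual Riesz bases for H. For k ∈ Fin 2, k' ∈ Fin 3 and n, m ∈ ℤ define z_{(k,k'),(n,m)} = ∑_{j=0}^{k} ∑_{j'=0}^{k'} (−1)^{(k−j)+(k'−j')} C(k,j) C(k',j') u_{(2n+j, 3m+j')} and w_{(k,k'),(n,m)} = ∑_{j=k}^{1} ∑_{j'=k'}^{2} C(j,k) C(j',k') v_{(2n+j, 3m+j')}, where C(·,·) is the binomial coefficient. Then z : (Fin 2 × Fin 3) × (ℤ × ℤ) → H is a Riesz basis for H with dual Riesz basis w; in particular, for every f ∈ H the family (((k,k'),(n,m)) ↦ ⟨f, z_{(k,k'),(n,m)}⟩ w_{(k,k'),(n,m)}) has sum f (unconditional convergence in H). -/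

import Mathlib

noncomputable section
open scoped Classical

local notation "⟪" f ", " g "⟫" => @inner ℂ _ _ g f

/-- A family `x : ι → H` is a Riesz basis for `H` if it is the image of a Hilbert
(orthonormal) basis of `H` under a continuous linear equivalence of `H`. -/
def IsRieszBasis {H : Type*} [NormedAddCommGroup H] [InnerProductSpace ℂ H]
    {ι : Type*} (x : ι → H) : Prop :=
  ∃ (e : HilbertBasis ι ℂ H) (T : H ≃L[ℂ] H), ∀ i, x i = T (e i)

/-- Families `x, y : ι → H` form a pair of dual Riesz bases: both are Riesz bases,
they are biorthogonal, and `∑ᵢ ⟨f, yᵢ⟩ xᵢ = f` for every `f` (inner product linear in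
the first argument, conjugate-linear in the second). -/
def IsDualRieszBasisPair {H : Type*} [NormedAddCommGroup H] [InnerProductSpace ℂ H]
    {ι : Type*} (x y : ι → H) : Prop :=
  IsRieszBasis x ∧ IsRieszBasis y ∧
    (∀ i j, ⟪x i, y j⟫ = if i = j then (1 : ℂ) else 0) ∧
    ∀ f : H, HasSum (fun i => ⟪f, y i⟫ • x i) f

/-!
Index `ℤ × ℤ` by residues and quotients, `((a₁, a₂), (n, m)) ↦ (2n + a₁, 3m + a₂)`. Then `z` and
`w` arise from `u` and `v` by letting a matrix act on each block `{((a₁, a₂), (n, m))}` with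
`(n, m)` fixed: `C = P₂⁻¹ ⊗ P₃⁻¹` for `z` and `D = (P₂ ⊗ P₃)ᴴ` for `w`, where `P_N` is the lower
triangular Pascal matrix, whose inverse is the signed Pascal matrix.

Relative to a Hilbert basis `e`, such a block action is the bounded operator
`∑ C a d • (partial isometry e (a, j) ↦ e (d, j))`, and it is invertible when `C` is; so block
actions by invertible matrices carry Riesz bases to Riesz bases. As `C * Dᴴ = 1`, they also
preserve biorthogonality. Finally, if `x = T ∘ e` is a Riesz basis and `y` is biorthogonal to it,
then `y` is forced to be `(T⁻¹)* ∘ e`, which yields `f = ∑ ⟪f, y i⟫ • x i`, in both orders.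
-/

open Finset Matrix
open scoped Kronecker

namespace HilbertBasis

variable {𝕜 H ι ι' : Type*} [RCLike 𝕜] [NormedAddCommGroup H] [InnerProductSpace 𝕜 H]

theorem ext_continuousLinearMap {F : Type*} [TopologicalSpace F] [AddCommMonoid F]
    [Module 𝕜 F] [T2Space F] (e : HilbertBasis ι 𝕜 H) {S T : H →L[𝕜] F}
    (h : ∀ i, S (e i) = T (e i)) : S = T :=
  ContinuousLinearMap.ext_on
    (Submodule.dense_iff_topologicalClosure_eq_top.mpr e.dense_span)
    (by rintro _ ⟨i, rfl⟩; exact h i)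

variable [CompleteSpace H]

def reindex (e : HilbertBasis ι 𝕜 H) (σ : ι' ≃ ι) : HilbertBasis ι' 𝕜 H :=
  HilbertBasis.mk (e.orthonormal.comp σ σ.injective)
    (by rw [σ.surjective.range_comp, e.dense_span])

@[simp]
theorem reindex_apply (e : HilbertBasis ι 𝕜 H) (σ : ι' ≃ ι) (i : ι') :
    e.reindex σ i = e (σ i) :=
  congrFun (HilbertBasis.coe_mk _ _) i

def permute (e : HilbertBasis ι 𝕜 H) (σ : ι ≃ ι) : H ≃L[𝕜] H :=
  (e.repr.trans (e.reindex σ).repr.symm).toContinuousLinearEquiv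

@[simp]
theorem permute_apply_self (e : HilbertBasis ι 𝕜 H) (σ : ι ≃ ι) (i : ι) :
    e.permute σ (e i) = e (σ i) := by
  classical
  change (e.reindex σ).repr.symm (e.repr (e i)) = e (σ i)
  rw [HilbertBasis.repr_self, HilbertBasis.repr_symm_single, reindex_apply]

def projection (e : HilbertBasis ι 𝕜 H) (A : Set ι) : H →L[𝕜] H :=
  (Submodule.span 𝕜 (e '' Aᶜ))ᗮ.starProjection

theorem projection_apply_self (e : HilbertBasis ι 𝕜 H) (A : Set ι) (i : ι) :
    e.projection A (e i) = if i ∈ A then e i else 0 := by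
  split_ifs with hi
  · refine Submodule.starProjection_eq_self_iff.mpr ((Submodule.mem_orthogonal _ _).mpr ?_)
    intro x hx
    refine Submodule.span_induction ?_ (by simp)
      (fun _ _ _ _ h₁ h₂ => by simp [inner_add_left, h₁, h₂])
      (fun _ _ _ h => by simp [inner_smul_left, h]) hx
    rintro _ ⟨k, hk, rfl⟩
    exact e.orthonormal.2 (ne_of_mem_of_not_mem hi hk).symm
  · exact (Submodule.starProjection_apply_eq_zero_iff _).mpr
      (Submodule.le_orthogonal_orthogonal _ (Submodule.subset_span ⟨i, hi, rfl⟩))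

end HilbertBasis

section BlockTransform

variable {𝕜 H κ J : Type*} [RCLike 𝕜] [NormedAddCommGroup H] [InnerProductSpace 𝕜 H]
  [Fintype κ]

def Matrix.blockTransform (C : Matrix κ κ 𝕜) (x : κ × J → H) : κ × J → H :=
  fun i => ∑ d, C i.1 d • x (d, i.2)

variable [CompleteSpace H]

def HilbertBasis.blockOp (e : HilbertBasis (κ × J) 𝕜 H) (C : Matrix κ κ 𝕜) : H →L[𝕜] H :=
  ∑ a, ∑ d, C a d •
    ((e.permute ((Equiv.swap a d).prodCongr (Equiv.refl J)) : H →L[𝕜] H) ∘L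
      e.projection {i | i.1 = a})

theorem HilbertBasis.blockOp_apply_self (e : HilbertBasis (κ × J) 𝕜 H) (C : Matrix κ κ 𝕜)
    (i : κ × J) : e.blockOp C (e i) = C.blockTransform e i := by
  obtain ⟨b, j⟩ := i
  simp only [blockOp, _root_.sum_apply, _root_.smul_apply, ContinuousLinearMap.comp_apply,
    projection_apply_self, Set.mem_ofPred_eq]
  simp [Matrix.blockTransform, apply_ite, Finset.sum_ite_eq]

theorem HilbertBasis.blockOp_mul (e : HilbertBasis (κ × J) 𝕜 H) (C D : Matrix κ κ 𝕜) :
    e.blockOp (C * D) = e.blockOp D ∘L e.blockOp C := by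
  refine e.ext_continuousLinearMap fun i => ?_
  simp only [ContinuousLinearMap.comp_apply, blockOp_apply_self, Matrix.blockTransform, map_sum,
    map_smul, mul_apply, Finset.sum_smul, Finset.smul_sum, smul_smul]
  exact Finset.sum_comm

theorem HilbertBasis.blockOp_one [DecidableEq κ] (e : HilbertBasis (κ × J) 𝕜 H) :
    e.blockOp (1 : Matrix κ κ 𝕜) = ContinuousLinearMap.id 𝕜 H :=
  e.ext_continuousLinearMap fun i => by
    simp [blockOp_apply_self, Matrix.blockTransform, one_apply]

end BlockTransform

section RieszBasis

variable {H : Type*} [NormedAddCommGroup H] [InnerProductSpace ℂ H]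

def IsBiorthogonal {ι : Type*} (x y : ι → H) : Prop :=
  ∀ i j, ⟪x i, y j⟫ = if i = j then (1 : ℂ) else 0

theorem inner_blockTransform {κ J : Type*} [Fintype κ] {x y : κ × J → H}
    (hxy : IsBiorthogonal x y) (C D : Matrix κ κ ℂ)
    (a b : κ) (j j' : J) :
    ⟪C.blockTransform x (a, j), D.blockTransform y (b, j')⟫ =
      if j = j' then (C * Dᴴ) a b else 0 := by
  unfold IsBiorthogonal at hxy
  simp only [Matrix.blockTransform, sum_inner, inner_sum, inner_smul_left, inner_smul_right, hxy,
    Prod.mk.injEq]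
  split_ifs with hj
  · simp [hj, mul_apply, mul_comm]
  · simp [hj]

variable [CompleteSpace H] {ι ι' : Type*}

theorem IsRieszBasis.comp_equiv {x : ι → H} (hx : IsRieszBasis x) (σ : ι' ≃ ι) :
    IsRieszBasis (x ∘ σ) := by
  obtain ⟨e, T, hT⟩ := hx
  exact ⟨e.reindex σ, T, fun i => by simp [hT]⟩

theorem IsRieszBasis.hasSum_of_biorthogonal {x y : ι → H} (hx : IsRieszBasis x)
    (hxy : IsBiorthogonal x y) (f : H) :
    HasSum (fun i => ⟪f, y i⟫ • x i) f := by
  obtain ⟨e, T, hT⟩ := hx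
  set x' : ι → H := fun i => (T.symm : H →L[ℂ] H).adjoint (e i)
  have expand : ∀ g : H, HasSum (fun i => ⟪g, x' i⟫ • x i) g := fun g => by
    simpa [x', hT, ContinuousLinearMap.adjoint_inner_left, e.repr_apply_apply] using
      (T : H →L[ℂ] H).hasSum (e.hasSum_repr (T.symm g))
  have hxx' : ∀ i j, ⟪x i, x' j⟫ = if i = j then (1 : ℂ) else 0 := fun i j => by
    simp [x', hT, ContinuousLinearMap.adjoint_inner_left, orthonormal_iff_ite.mp e.orthonormal,
      eq_comm]
  have hy : ∀ j, y j = x' j := fun j => by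
    set g := y j - x' j
    have hg : ∀ i, ⟪x i, g⟫ = 0 := fun i => by simp [g, hxy i j, hxx']
    have := (innerSL ℂ g).hasSum (expand g)
    simp only [innerSL_apply_apply, inner_smul_right, hg, mul_zero] at this
    exact sub_eq_zero.mp (inner_self_eq_zero.mp (this.unique hasSum_zero))
  simpa only [hy] using expand f

theorem IsDualRieszBasisPair.symm {x y : ι → H} (h : IsDualRieszBasisPair x y) :
    IsDualRieszBasisPair y x := by
  obtain ⟨hx, hy, hxy, -⟩ := h
  have hyx : IsBiorthogonal y x := fun i j => by
    rw [← inner_conj_symm, hxy j i]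
    split_ifs <;> simp_all [eq_comm]
  exact ⟨hy, hx, hyx, hy.hasSum_of_biorthogonal hyx⟩

theorem IsDualRieszBasisPair.comp_equiv {x y : ι → H} (h : IsDualRieszBasisPair x y)
    (σ : ι' ≃ ι) : IsDualRieszBasisPair (x ∘ σ) (y ∘ σ) := by
  obtain ⟨hx, hy, hxy, -⟩ := h
  have hxy' : IsBiorthogonal (x ∘ σ) (y ∘ σ) := fun i j => by
    simp [hxy, σ.injective.eq_iff]
  exact ⟨hx.comp_equiv σ, hy.comp_equiv σ, hxy', (hx.comp_equiv σ).hasSum_of_biorthogonal hxy'⟩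

variable {κ J : Type*} [Fintype κ]

theorem IsRieszBasis.blockTransform [DecidableEq κ] {x : κ × J → H} (hx : IsRieszBasis x)
    {C D : Matrix κ κ ℂ} (hCD : C * D = 1) : IsRieszBasis (C.blockTransform x) := by
  obtain ⟨e, T, hT⟩ := hx
  have inv : ∀ {A B : Matrix κ κ ℂ}, A * B = 1 →
      Function.LeftInverse (e.blockOp B) (e.blockOp A) := fun h v => by
    rw [← ContinuousLinearMap.comp_apply, ← e.blockOp_mul, h, e.blockOp_one]
    rfl
  let S : H ≃L[ℂ] H := ContinuousLinearEquiv.equivOfInverse (e.blockOp C) (e.blockOp D)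
    (inv hCD) (inv (mul_eq_one_comm.mp hCD))
  refine ⟨e, S.trans T, fun i => ?_⟩
  simp [S, e.blockOp_apply_self, Matrix.blockTransform, hT]

theorem IsDualRieszBasisPair.blockTransform [DecidableEq κ] {x y : κ × J → H}
    (h : IsDualRieszBasisPair x y) {C D : Matrix κ κ ℂ} (hCD : C * Dᴴ = 1) :
    IsDualRieszBasisPair (C.blockTransform x) (D.blockTransform y) := by
  obtain ⟨hx, hy, hxy, -⟩ := h
  have hDC : D * Cᴴ = 1 := by simpa using congrArg conjTranspose hCD
  have hbi : IsBiorthogonal (C.blockTransform x) (D.blockTransform y) := by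
    rintro ⟨a, j⟩ ⟨b, j'⟩
    rw [inner_blockTransform hxy, hCD, one_apply]
    by_cases hj : j = j' <;> by_cases hab : a = b <;> simp [hj, hab]
  have hx' := hx.blockTransform hCD
  exact ⟨hx', hy.blockTransform hDC, hbi, hx'.hasSum_of_biorthogonal hbi⟩

end RieszBasis

section Pascal

theorem Nat.sum_range_neg_one_pow_mul_choose_mul_choose {R : Type*} [CommRing R] (a b : ℕ) :
    ∑ d ∈ range (a + 1), (-1 : R) ^ (a - d) * a.choose d * d.choose b =
      if a = b then 1 else 0 := by
  rcases lt_or_ge a b with hab | hab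
  · rw [if_neg hab.ne]
    refine sum_eq_zero fun d hd => ?_
    rw [Nat.choose_eq_zero_of_lt (lt_of_le_of_lt (Nat.lt_succ_iff.mp (mem_range.mp hd)) hab)]
    simp
  obtain ⟨m, rfl⟩ := Nat.exists_eq_add_of_le hab
  have shift : ∀ t ∈ range (m + 1), (-1 : R) ^ (b + m - (b + t)) * (b + m).choose (b + t) *
      (b + t).choose b = (b + m).choose b * (1 ^ t * (-1) ^ (m - t) * m.choose t) := by
    intro t _
    rw [mul_assoc, ← Nat.cast_mul, Nat.choose_mul (Nat.le_add_right b t)]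
    simp only [Nat.add_sub_cancel_left, Nat.add_sub_add_left, Nat.cast_mul, one_pow]
    ring
  rw [add_assoc, sum_range_add, sum_eq_zero fun d hd => by
      simp [Nat.choose_eq_zero_of_lt (mem_range.mp hd)],
    zero_add, sum_congr rfl shift, ← mul_sum, ← add_pow, add_neg_cancel]
  rcases m with _ | m <;> simp

variable (R : Type*) (n : ℕ)

def pascal [Semiring R] : Matrix (Fin n) (Fin n) R :=
  Matrix.of fun i j => ((i : ℕ).choose j : R)

def signedPascal [Ring R] : Matrix (Fin n) (Fin n) R :=
  Matrix.of fun i j => (-1) ^ ((i : ℕ) - j) * ((i : ℕ).choose j : R)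

theorem signedPascal_mul_pascal [CommRing R] : signedPascal R n * pascal R n = 1 := by
  ext a b
  simp only [mul_apply, one_apply, signedPascal, pascal, of_apply, ← Fin.val_inj]
  rw [Fin.sum_univ_eq_sum_range (fun d => (-1 : R) ^ ((a : ℕ) - d) * (a : ℕ).choose d *
    d.choose b), ← Nat.sum_range_neg_one_pow_mul_choose_mul_choose]
  refine (sum_subset (range_subset_range.mpr a.isLt) fun d _ hd => ?_).symm
  simp [Nat.choose_eq_zero_of_lt (not_lt.mp (mt mem_range.mpr hd))]

end Pascal

theorem Finset.sum_sum_eq_sum_fin_prod {M : Type*} [AddCommMonoid M] {N N' : ℕ}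
    {s s' : Finset ℕ} (hs : s ⊆ range N) (hs' : s' ⊆ range N') (f : ℕ → ℕ → M)
    (hf : ∀ j < N, ∀ j' < N', (j ∉ s ∨ j' ∉ s') → f j j' = 0) :
    ∑ j ∈ s, ∑ j' ∈ s', f j j' = ∑ d : Fin N × Fin N', f d.1 d.2 := by
  rw [← sum_product', sum_subset (product_subset_product hs hs'), sum_product',
    Fintype.sum_prod_type, ← Fin.sum_univ_eq_sum_range]
  · simp only [Fin.sum_univ_eq_sum_range (f _)]
  · simp only [mem_product, mem_range, Prod.forall]
    exact fun j j' hj hj' => hf j hj.1 j' hj.2 (not_and_or.mp hj')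

def residueEquiv (N N' : ℕ) [NeZero N] [NeZero N'] : (Fin N × Fin N') × (ℤ × ℤ) ≃ ℤ × ℤ :=
  (Equiv.prodProdProdComm _ _ _ _).trans
    (((Equiv.prodComm _ _).trans (Int.divModEquiv N).symm).prodCongr
      ((Equiv.prodComm _ _).trans (Int.divModEquiv N').symm))

theorem residueEquiv_apply (N N' : ℕ) [NeZero N] [NeZero N']
    (i : (Fin N × Fin N') × (ℤ × ℤ)) :
    residueEquiv N N' i = (N * i.2.1 + i.1.1, N' * i.2.2 + i.1.2) := by
  simp [residueEquiv, mul_comm]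

theorem stmt19_general {H : Type*} [NormedAddCommGroup H] [InnerProductSpace ℂ H]
    [CompleteSpace H]
    (u v : ℤ × ℤ → H) (huv : IsDualRieszBasisPair u v)
    (z w : (Fin 2 × Fin 3) × (ℤ × ℤ) → H)
    (hz : ∀ (k : Fin 2) (k' : Fin 3) (n m : ℤ), z ((k, k'), (n, m)) =
      ∑ j ∈ Finset.range ((k : ℕ) + 1), ∑ j' ∈ Finset.range ((k' : ℕ) + 1),
        ((-1 : ℂ) ^ (((k : ℕ) - j) + ((k' : ℕ) - j')) *
          (Nat.choose k j : ℂ) * (Nat.choose k' j' : ℂ)) •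
            u (2 * n + (j : ℤ), 3 * m + (j' : ℤ)))
    (hw : ∀ (k : Fin 2) (k' : Fin 3) (n m : ℤ), w ((k, k'), (n, m)) =
      ∑ j ∈ Finset.Icc (k : ℕ) 1, ∑ j' ∈ Finset.Icc (k' : ℕ) 2,
        ((Nat.choose j k : ℂ) * (Nat.choose j' k' : ℂ)) •
          v (2 * n + (j : ℤ), 3 * m + (j' : ℤ))) :
    IsDualRieszBasisPair z w ∧
      ∀ f : H, HasSum (fun i : (Fin 2 × Fin 3) × (ℤ × ℤ) => ⟪f, z i⟫ • w i) f := by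
  have hz' :
      z = (signedPascal ℂ 2 ⊗ₖ signedPascal ℂ 3).blockTransform (u ∘ residueEquiv 2 3) := by
    funext ⟨⟨k, k'⟩, n, m⟩
    rw [hz, sum_sum_eq_sum_fin_prod (range_subset_range.mpr k.isLt)
      (range_subset_range.mpr k'.isLt)]
    · simp [Matrix.blockTransform, residueEquiv_apply, signedPascal, pow_add, mul_assoc,
        mul_left_comm]
    · intro j _ j' _ h
      rcases h with h | h <;> simp [Nat.choose_eq_zero_of_lt (not_lt.mp (mt mem_range.mpr h))]
  have hw' : w = (pascal ℂ 2 ⊗ₖ pascal ℂ 3)ᴴ.blockTransform (v ∘ residueEquiv 2 3) := by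
    funext ⟨⟨k, k'⟩, n, m⟩
    have hIcc : ∀ {a b : ℕ}, Icc a b ⊆ range (b + 1) := fun hj =>
      mem_range.mpr (Nat.lt_succ_of_le (mem_Icc.mp hj).2)
    rw [hw, sum_sum_eq_sum_fin_prod hIcc hIcc]
    · simp [Matrix.blockTransform, residueEquiv_apply, pascal]
    · intro j _ j' _ h
      rcases h with h | h <;>
        simp [Nat.choose_eq_zero_of_lt (not_le.mp fun hk => h (mem_Icc.mpr ⟨hk, by omega⟩))]
  have hCD :
      (signedPascal ℂ 2 ⊗ₖ signedPascal ℂ 3) * (pascal ℂ 2 ⊗ₖ pascal ℂ 3)ᴴᴴ = 1 := by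
    rw [conjTranspose_conjTranspose, ← mul_kronecker_mul, signedPascal_mul_pascal,
      signedPascal_mul_pascal, one_kronecker_one]
  have h := (huv.comp_equiv (residueEquiv 2 3)).blockTransform hCD
  rw [hz', hw']
  exact ⟨h, h.symm.2.2.2⟩

theorem stmt19 {H : Type*} [NormedAddCommGroup H] [InnerProductSpace ℂ H]
    [CompleteSpace H] [TopologicalSpace.SeparableSpace H]
    (u v : ℤ × ℤ → H) (huv : IsDualRieszBasisPair u v)
    (z w : (Fin 2 × Fin 3) × (ℤ × ℤ) → H)
    (hz : ∀ (k : Fin 2) (k' : Fin 3) (n m : ℤ), z ((k, k'), (n, m)) =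
      ∑ j ∈ Finset.range ((k : ℕ) + 1), ∑ j' ∈ Finset.range ((k' : ℕ) + 1),
        ((-1 : ℂ) ^ (((k : ℕ) - j) + ((k' : ℕ) - j')) *
          (Nat.choose k j : ℂ) * (Nat.choose k' j' : ℂ)) •
            u (2 * n + (j : ℤ), 3 * m + (j' : ℤ)))
    (hw : ∀ (k : Fin 2) (k' : Fin 3) (n m : ℤ), w ((k, k'), (n, m)) =
      ∑ j ∈ Finset.Icc (k : ℕ) 1, ∑ j' ∈ Finset.Icc (k' : ℕ) 2,
        ((Nat.choose j k : ℂ) * (Nat.choose j' k' : ℂ)) •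
          v (2 * n + (j : ℤ), 3 * m + (j' : ℤ))) :
    IsDualRieszBasisPair z w ∧
      ∀ f : H, HasSum (fun i : (Fin 2 × Fin 3) × (ℤ × ℤ) => ⟪f, z i⟫ • w i) f :=
  stmt19_general u v huv z w hz hw
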